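/- arXiv:1905.03612 — 2 statements merged into one kernel-verified Lean document; each statement's English description precedes it below -/
import Mathlib

section
/- A countable graph G has property FIN if and only if χ*(G) = ∞ and no set W ⊆ V(G) induces a subgraph with all infinite degrees. -/
/-- There is an increasing path on `k` vertices in `G` under the vertex labeling `φ`. -/
def IncrPathOn {V : Type*} (G : SimpleGraph V) (φ : V → ℕ) (k : ℕ) : Prop :=
  ∃ w : ℕ → V, (∀ i j, i < k → j < k → w i = w j → i = j) ∧
    ∀ i, i + 1 < k → G.Adj (w i) (w (i + 1)) ∧ φ (w i) < φ (w (i + 1))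

/-- There is an infinite increasing path in `G` under the vertex labeling `φ`. -/
def InfIncrPath {V α : Type*} [Preorder α] (G : SimpleGraph V) (φ : V → α) : Prop :=
  ∃ w : ℕ → V, Function.Injective w ∧ ∀ i, G.Adj (w i) (w (i + 1)) ∧ φ (w i) < φ (w (i + 1))

/-- `V(G)` can be partitioned into `k` independent sets `V_1, …, V_k` such that every vertex
of `V_j` has only finitely many neighbours in `V_1 ∪ ⋯ ∪ V_{j-1}`. -/
def HasChiStarPartition {V : Type*} (G : SimpleGraph V) (k : ℕ) : Prop :=
  ∃ P : V → Fin k, (∀ u v, G.Adj u v → P u ≠ P v) ∧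
    ∀ v, {u | G.Adj v u ∧ (P u : ℕ) < (P v : ℕ)}.Finite

/-- Property `FIN`: every bijective labeling of `V` by `ℕ` yields increasing paths on any
number of vertices, but some bijective labeling yields no infinite increasing path. -/
def FIN {V : Type*} (G : SimpleGraph V) : Prop :=
  (∀ φ : V ≃ ℕ, ∀ k : ℕ, IncrPathOn G (fun v => φ v) k) ∧
  (∃ φ : V ≃ ℕ, ¬ InfIncrPath G (fun v => φ v))

/-!
An increasing path can always be continued inside a set all of whose degrees are infinite, and a
labeling that lists every vertex after its finitely many neighbours in lower classes of a
`χ*`-partition makes increasing paths climb the classes. Conversely, if some labeling has no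
increasing path on `k` vertices, the length of a longest increasing path ending at a vertex is a
`χ*`-partition into `k - 1` classes.

The main step is a labeling without infinite increasing paths when no subgraph has all degrees
infinite. Peeling off, transfinitely, the vertices with finitely many neighbours in what is left
gives an ordinal label `F` under which each vertex has finitely many neighbours of larger label.
Vertices are then placed in finite blocks, every new vertex getting an ordinal height below those
of its placed neighbours. A placed vertex keeps height at least `ω ^ (F y + 2)` for each unplaced
neighbour `y`, and blocks grow only along edges increasing `F`, which keeps them finite. Listing
the blocks one after another, heights decrease along every increasing path.
-/

open Relation

universe u

section Labelings

variable {V : Type*} (G : SimpleGraph V) (φ : V → ℕ)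

/-- An increasing path with `m` edges (so `m + 1` vertices) ending at `v`. -/
def IncrPathTo (v : V) (m : ℕ) : Prop :=
  ∃ w : ℕ → V, w m = v ∧ ∀ i < m, G.Adj (w i) (w (i + 1)) ∧ φ (w i) < φ (w (i + 1))

variable {G φ}

theorem incrPathTo_zero (v : V) : IncrPathTo G φ v 0 :=
  ⟨fun _ => v, rfl, by simp⟩

theorem IncrPathTo.snoc {u v : V} {m : ℕ} (h : IncrPathTo G φ u m) (huv : G.Adj u v)
    (hlt : φ u < φ v) : IncrPathTo G φ v (m + 1) := by
  obtain ⟨w, rfl, hw⟩ := h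
  refine ⟨fun i => if i = m + 1 then v else w i, by simp, fun i hi => ?_⟩
  rcases Nat.lt_succ_iff_lt_or_eq.mp hi with hi | rfl
  · have h1 : i ≠ m + 1 := by omega
    have h2 : i ≠ m := hi.ne
    simpa [h1, h2] using hw i hi
  · simpa using ⟨huv, hlt⟩

theorem IncrPathTo.incrPathOn {v : V} {m : ℕ} (h : IncrPathTo G φ v m) :
    IncrPathOn G φ (m + 1) := by
  obtain ⟨w, -, hw⟩ := h
  have hmono : ∀ i j, i < j → j ≤ m → φ (w i) < φ (w j) := by
    intro i j hij hjm
    induction j, hij using Nat.le_induction with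
    | base => exact (hw i (by omega)).2
    | succ j hij ih => exact (ih (by omega)).trans (hw j (by omega)).2
  refine ⟨w, fun i j hi hj hij => ?_, fun i hi => hw i (by omega)⟩
  by_contra hne
  rcases Nat.lt_or_gt_of_ne hne with h | h
  · exact (hmono i j h (by omega)).ne (congrArg φ hij)
  · exact (hmono j i h (by omega)).ne' (congrArg φ hij)

theorem IncrPathOn.mono {j k : ℕ} (h : IncrPathOn G φ k) (hjk : j ≤ k) : IncrPathOn G φ j := by
  obtain ⟨w, hinj, hw⟩ := h
  exact ⟨w, fun a b ha hb => hinj a b (by omega) (by omega), fun i hi => hw i (by omega)⟩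

open Classical in
/-- The classes `ℓ v` = number of edges of a longest increasing path ending at `v` form a
`χ*`-partition: a neighbour in a lower class has a smaller label. -/
theorem hasChiStarPartition_of_not_incrPathOn (hφ : Function.Injective φ) {k : ℕ}
    (hk : ¬ IncrPathOn G φ k) : HasChiStarPartition G (k - 1) := by
  let ℓ : V → ℕ := fun v => Nat.findGreatest (IncrPathTo G φ v) k
  have hℓ : ∀ v, IncrPathTo G φ v (ℓ v) := fun v =>
    Nat.findGreatest_spec (Nat.zero_le k) (incrPathTo_zero v)
  have hℓk : ∀ v, ℓ v < k - 1 := fun v => by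
    by_contra! hle
    exact hk ((hℓ v).incrPathOn.mono (by omega))
  have hℓ_lt : ∀ u v, G.Adj u v → φ u < φ v → ℓ u < ℓ v := fun u v huv hlt =>
    Nat.le_findGreatest (by have := hℓk u; omega) ((hℓ u).snoc huv hlt)
  refine ⟨fun v => ⟨ℓ v, hℓk v⟩, fun u v huv heq => ?_, fun v => ?_⟩
  · have hne : φ u ≠ φ v := hφ.ne (G.ne_of_adj huv)
    rcases hne.lt_or_gt with h | h
    · exact (hℓ_lt u v huv h).ne (Fin.val_eq_of_eq heq)
    · exact (hℓ_lt v u huv.symm h).ne' (Fin.val_eq_of_eq heq)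
  · refine ((Set.finite_Iio (φ v)).preimage hφ.injOn).subset fun u ⟨hvu, hlt⟩ => ?_
    by_contra! hge
    rw [Set.mem_preimage, Set.mem_Iio, not_lt] at hge
    exact (hℓ_lt v u hvu (lt_of_le_of_ne hge (hφ.ne (G.ne_of_adj hvu)))).not_gt hlt

theorem infIncrPath_of_forall_infinite {W : Set V} (hne : W.Nonempty)
    (hinf : ∀ v ∈ W, {u | u ∈ W ∧ G.Adj v u}.Infinite) (hφ : Function.Injective φ) :
    InfIncrPath G φ := by
  have hstep : ∀ v : W, ∃ u : W, G.Adj v u ∧ φ v < φ u := fun ⟨v, hv⟩ => by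
    obtain ⟨_, ⟨u, hu, rfl⟩, hlt⟩ := ((hinf v hv).image hφ.injOn).exists_gt (φ v)
    exact ⟨⟨u, hu.1⟩, hu.2, hlt⟩
  choose next hnext using hstep
  let w : ℕ → V := fun n => (next^[n] ⟨_, hne.some_mem⟩ : W)
  have hw : ∀ n, G.Adj (w n) (w (n + 1)) ∧ φ (w n) < φ (w (n + 1)) := fun n => by
    simpa only [w, Function.iterate_succ_apply'] using hnext _
  exact ⟨w, (strictMono_nat_of_lt_succ fun n => (hw n).2).injective.of_comp, hw⟩

end Labelings

section LinearExtension

variable {α : Type*} {r : α → α → Prop}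

/-- König's lemma. -/
theorem finite_setOf_reflTransGen (hfin : ∀ a, {b | r a b}.Finite)
    (hwf : WellFounded (flip r)) (a : α) : {b | ReflTransGen r a b}.Finite := by
  induction a using hwf.induction with
  | _ a ih =>
    refine (((hfin a).biUnion fun b hb => ih b hb).insert a).subset fun c hc => ?_
    rcases ReflTransGen.cases_head_iff.mp hc with rfl | ⟨b, hab, hbc⟩
    · exact Set.mem_insert _ _
    · exact Set.mem_insert_of_mem a (Set.mem_biUnion hab hbc)

theorem wellFounded_flip_of_forall_not_chain (h : ∀ f : ℕ → α, ¬ ∀ n, r (f n) (f (n + 1))) :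
    WellFounded (flip r) :=
  wellFounded_iff_isEmpty_descending_chain.mpr ⟨fun ⟨f, hf⟩ => h f hf⟩

theorem exists_equiv_nat_of_finite_ancestors [Countable α] [Infinite α]
    (hacyc : ∀ a, ¬ TransGen r a a) (hfin : ∀ a, {b | ReflTransGen r b a}.Finite) :
    ∃ φ : α ≃ ℕ, ∀ a b, r a b → φ a < φ b := by
  classical
  obtain ⟨e, he⟩ := Countable.exists_injective_nat α
  -- `key a` encodes the finite set of ancestors of `a` in binary.
  let anc : α → Finset ℕ := fun a => (hfin a).toFinset.image e
  let key : α → ℕ := fun a => ∑ i ∈ anc a, 2 ^ i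
  have mem_anc : ∀ {a b}, e b ∈ anc a ↔ ReflTransGen r b a := by
    simp [anc, he.eq_iff]
  have key_lt : ∀ a b, r a b → key a < key b := by
    intro a b hab
    refine Finset.sum_lt_sum_of_subset (i := e b) ?_ (mem_anc.mpr .refl) ?_ (by positivity)
      fun _ _ _ => Nat.zero_le _
    · intro i hi
      obtain ⟨c, -, rfl⟩ := Finset.mem_image.mp hi
      exact mem_anc.mpr ((mem_anc.mp hi).tail hab)
    · exact fun hb => hacyc b (TransGen.tail' (mem_anc.mp hb) hab)
  have key_inj : Function.Injective key := by
    intro a b hab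
    have hanc : anc a = anc b := Finset.geomSum_injective le_rfl hab
    have hab' : ReflTransGen r a b := mem_anc.mp (hanc ▸ mem_anc.mpr .refl)
    have hba : ReflTransGen r b a := mem_anc.mp (hanc ▸ mem_anc.mpr .refl)
    rcases reflTransGen_iff_eq_or_transGen.mp hab' with h | h
    · exact h.symm
    · exact (hacyc a (h.trans_left hba)).elim
  have : Infinite (Set.range key) := (Set.infinite_range_of_injective key_inj).to_subtype
  exact ⟨(Equiv.ofInjective key key_inj).trans (Nat.Subtype.orderIsoOfNat _).symm.toEquiv,
    fun a b hab => (OrderIso.lt_iff_lt _).mpr (key_lt a b hab)⟩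

end LinearExtension

theorem rel_of_adj_of_lt {V : Type*} {G : SimpleGraph V} {r : V → V → Prop} {φ : V → ℕ}
    (hφ : ∀ u v, r u v → φ u < φ v) (horient : ∀ u v, G.Adj u v → r u v ∨ r v u) {u v : V}
    (huv : G.Adj u v) (hlt : φ u < φ v) : r u v :=
  (horient u v huv).resolve_right fun hvu => (hφ v u hvu).not_gt hlt

/-- Order `V` so that every vertex comes after its neighbours in lower classes; an increasing
path then climbs the classes. -/
theorem exists_equiv_not_incrPathOn {V : Type*} [Countable V] [Infinite V] {G : SimpleGraph V}
    {k : ℕ} (hG : HasChiStarPartition G k) : ∃ φ : V ≃ ℕ, ¬ IncrPathOn G φ (k + 1) := by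
  obtain ⟨P, hP, hfin⟩ := hG
  let r : V → V → Prop := fun u v => G.Adj u v ∧ (P u : ℕ) < P v
  have hr : ∀ u v, TransGen r u v → (P u : ℕ) < P v := fun u v h => by
    induction h with
    | single h => exact h.2
    | tail _ h ih => exact ih.trans h.2
  have hwf : WellFounded r :=
    Subrelation.wf (fun h => h.2) (measure fun v => (P v : ℕ)).wf
  have hanc : ∀ v, {u | ReflTransGen r u v}.Finite := fun v =>
    (finite_setOf_reflTransGen (r := flip r)
      (fun v => (hfin v).subset fun u hu => ⟨hu.1.symm, hu.2⟩) hwf v).subset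
      fun u hu => ReflTransGen.swap _ _ hu
  obtain ⟨φ, hφ⟩ := exists_equiv_nat_of_finite_ancestors (fun v h => (hr v v h).false) hanc
  have horient : ∀ u v, G.Adj u v → r u v ∨ r v u := fun u v huv =>
    (Fin.val_injective.ne (hP u v huv)).lt_or_gt.imp (⟨huv, ·⟩) (⟨huv.symm, ·⟩)
  refine ⟨φ, fun ⟨w, _, hw⟩ => ?_⟩
  have hclimb : ∀ i ≤ k, i ≤ P (w i) := by
    intro i hi
    induction i with
    | zero => exact Nat.zero_le _
    | succ i ih =>
      have hr := rel_of_adj_of_lt hφ horient (hw i (by omega)).1 (hw i (by omega)).2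
      exact (ih (by omega)).trans_lt hr.2
  exact (hclimb k le_rfl).not_gt (P (w k)).isLt

namespace SimpleGraph

open Ordinal

variable {V : Type u} (G : SimpleGraph V)

def derivedSet : Ordinal.{u} → Set V :=
  Ordinal.lt_wf.fix fun α ih => {v | ∀ β (hβ : β < α), {u | u ∈ ih β hβ ∧ G.Adj v u}.Infinite}

theorem derivedSet_eq (α : Ordinal.{u}) :
    G.derivedSet α = {v | ∀ β < α, {u | u ∈ G.derivedSet β ∧ G.Adj v u}.Infinite} := by
  rw [derivedSet, WellFounded.fix_eq]

theorem derivedSet_anti : Antitone G.derivedSet := fun α β hαβ v hv => by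
  rw [derivedSet_eq] at hv ⊢
  exact fun γ hγ => hv γ (hγ.trans_le hαβ)

theorem exists_derivedSet_eq_empty
    (hW : ¬ ∃ W : Set V, W.Nonempty ∧ ∀ v ∈ W, {u | u ∈ W ∧ G.Adj v u}.Infinite) :
    ∃ α, G.derivedSet α = ∅ := by
  obtain ⟨α, hα⟩ : ∃ α, G.derivedSet (α + 1) = G.derivedSet α := by
    by_contra! hne
    have hdrop : ∀ α, ∃ v ∈ G.derivedSet α, v ∉ G.derivedSet (α + 1) := fun α => by
      by_contra! h
      exact hne α ((G.derivedSet_anti le_self_add).antisymm h)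
    choose f hf hf' using hdrop
    refine not_injective_of_ordinal f fun α β hfαβ => ?_
    by_contra hαβ
    rcases lt_or_gt_of_ne hαβ with h | h
    · exact hf' α (hfαβ ▸ G.derivedSet_anti (Order.add_one_le_of_lt h) (hf β))
    · exact hf' β (hfαβ ▸ G.derivedSet_anti (Order.add_one_le_of_lt h) (hf α))
  refine ⟨α, Set.not_nonempty_iff_eq_empty.mp fun hne => hW ⟨_, hne, fun v hv => ?_⟩⟩
  rw [← hα, derivedSet_eq] at hv
  exact hv α (lt_add_one α)

noncomputable def derivedRank (v : V) : Ordinal.{u} :=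
  sInf {α | {u | u ∈ G.derivedSet α ∧ G.Adj v u}.Finite}

theorem mem_derivedSet_derivedRank (v : V) : v ∈ G.derivedSet (G.derivedRank v) := by
  rw [derivedSet_eq]
  exact fun β hβ hfin => (csInf_le' (s := {α | {u | u ∈ G.derivedSet α ∧ G.Adj v u}.Finite})
    hfin).not_gt hβ

theorem finite_adj_derivedRank_le
    (hW : ¬ ∃ W : Set V, W.Nonempty ∧ ∀ v ∈ W, {u | u ∈ W ∧ G.Adj v u}.Infinite) (v : V) :
    {u | G.Adj v u ∧ G.derivedRank v ≤ G.derivedRank u}.Finite := by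
  obtain ⟨α, hα⟩ := G.exists_derivedSet_eq_empty hW
  have hrank : {u | u ∈ G.derivedSet (G.derivedRank v) ∧ G.Adj v u}.Finite :=
    csInf_mem (s := {α | {u | u ∈ G.derivedSet α ∧ G.Adj v u}.Finite}) ⟨α, by simp [hα]⟩
  exact hrank.subset fun u ⟨hvu, hle⟩ =>
    ⟨G.derivedSet_anti hle (G.mem_derivedSet_derivedRank u), hvu⟩

/-- Refining the derived rank by an enumeration separates adjacent vertices of equal rank. -/
theorem exists_ordinal_labeling [Countable V]
    (hW : ¬ ∃ W : Set V, W.Nonempty ∧ ∀ v ∈ W, {u | u ∈ W ∧ G.Adj v u}.Infinite) :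
    ∃ F : V → Ordinal.{u}, (∀ u v, G.Adj u v → F u ≠ F v) ∧
      ∀ v, {u | G.Adj v u ∧ F v < F u}.Finite := by
  obtain ⟨ι, hι⟩ := Countable.exists_injective_nat V
  let F : V → Ordinal.{u} := fun v => ω * G.derivedRank v + ι v
  have hF_lt : ∀ u v, G.derivedRank u < G.derivedRank v → F u < F v := fun u v h =>
    calc F u < ω * G.derivedRank u + ω := (add_lt_add_iff_left _).mpr (natCast_lt_omega0 _)
      _ = ω * (G.derivedRank u + 1) := (mul_add_one _ _).symm
      _ ≤ ω * G.derivedRank v := by gcongr; exact Order.add_one_le_of_lt h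
      _ ≤ F v := le_self_add
  refine ⟨F, fun u v huv heq => ?_, fun v => ?_⟩
  · rcases lt_trichotomy (G.derivedRank u) (G.derivedRank v) with h | h | h
    · exact (hF_lt u v h).ne heq
    · simp only [F, h, add_right_inj, Nat.cast_inj] at heq
      exact G.ne_of_adj huv (hι heq)
    · exact (hF_lt v u h).ne' heq
  · exact (G.finite_adj_derivedRank_le hW v).subset fun u ⟨hvu, hlt⟩ =>
      ⟨hvu, not_lt.mp fun h => (hF_lt u v h).not_gt hlt⟩

end SimpleGraph

section Staging

open Ordinal

variable {V : Type u}

theorem omega0_opow_add_natCast_lt (e : Ordinal.{u}) (n : ℕ) : ω ^ (e + 1) + n < ω ^ (e + 2) := by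
  have hlt : ω ^ (e + 1) < ω ^ (e + 2) :=
    (opow_lt_opow_iff_right one_lt_omega0).mpr ((add_lt_add_iff_left e).mpr (by norm_num))
  refine isPrincipal_add_omega0_opow _ hlt ((natCast_lt_omega0 n).trans_le ?_)
  exact left_le_opow ω (lt_of_lt_of_le (by norm_num) le_add_self)

theorem natCast_eq_of_omega0_opow_add_eq {a b : Ordinal.{u}} {m n : ℕ}
    (h : ω ^ (a + 1) + m = ω ^ (b + 1) + n) : m = n := by
  have key : ∀ {a b : Ordinal.{u}} {m n : ℕ}, a < b → ω ^ (a + 1) + m < ω ^ (b + 1) + n :=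
    fun {a b m n} hab => (omega0_opow_add_natCast_lt a m).trans_le <|
      ((opow_le_opow_iff_right one_lt_omega0).mpr <| by
        rw [show (2 : Ordinal) = 1 + 1 by norm_num, ← add_assoc]
        exact add_le_add_left (Order.add_one_le_of_lt hab) 1).trans le_self_add
  rcases lt_trichotomy a b with hab | rfl | hab
  · exact ((key hab).ne h).elim
  · exact_mod_cast add_left_cancel h
  · exact ((key hab).ne' h).elim

variable (G : SimpleGraph V) (F : V → Ordinal.{u})

/-- A placed vertex leaves room below its height for each of its unplaced neighbours. -/
def Budgeted (S : Set V) (h : V → Ordinal.{u}) : Prop :=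
  ∀ d ∈ S, ∀ y ∉ S, G.Adj d y → ω ^ (F y + 2) ≤ h d

/-- `z` must take its neighbour `y` of larger label into its block, since some placed neighbour
of `z` cannot afford `y`. -/
def Pulls (S : Set V) (h : V → Ordinal.{u}) (z y : V) : Prop :=
  G.Adj z y ∧ F z < F y ∧ y ∉ S ∧ ∃ d ∈ S, G.Adj z d ∧ h d < ω ^ (F y + 3)

def block (S : Set V) (h : V → Ordinal.{u}) (x : V) : Set V :=
  {z | ReflTransGen (Pulls G F S h) x z}

variable {G F} {S : Set V} {h : V → Ordinal.{u}}

/-- Along a chain of pulls the labels increase, so a placed vertex witnessing two pulls far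
apart would have to afford more than it can. -/
theorem not_forall_pulls (hS : S.Finite) (hb : Budgeted G F S h) (z : ℕ → V) :
    ¬ ∀ n, Pulls G F S h (z n) (z (n + 1)) := by
  intro hz
  choose d hdS hzd hdlt using fun n => (hz n).2.2.2
  have : Finite S := hS.to_subtype
  obtain ⟨m, n, hmn, heq⟩ :=
    Finite.exists_ne_map_eq_of_infinite fun n : ℕ => (⟨d (2 * n), hdS _⟩ : S)
  wlog hlt : m < n generalizing m n
  · exact this n m hmn.symm heq.symm (lt_of_le_of_ne (not_lt.mp hlt) hmn.symm)
  have hdd : d (2 * m) = d (2 * n) := congrArg Subtype.val heq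
  have hFz : StrictMono (F ∘ z) := strictMono_nat_of_lt_succ fun k => (hz k).2.1
  have hnS : z (2 * n) ∉ S := by
    obtain ⟨k, hk⟩ : ∃ k, 2 * n = k + 1 := ⟨2 * n - 1, by omega⟩
    exact hk ▸ (hz k).2.2.1
  have hafford := hb _ (hdS (2 * n)) _ hnS (hzd (2 * n)).symm
  have hexp : F (z (2 * m + 1)) + 3 ≤ F (z (2 * n)) + 2 := by
    rw [show (3 : Ordinal) = 1 + 2 by norm_num, ← add_assoc]
    exact add_le_add_left (Order.add_one_le_of_lt (hFz (by omega : 2 * m + 1 < 2 * n))) 2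
  refine (hdlt (2 * m)).not_ge (hdd ▸ le_trans ?_ hafford)
  exact (opow_le_opow_iff_right one_lt_omega0).mpr hexp

theorem block_finite (hFup : ∀ v, {u | G.Adj v u ∧ F v < F u}.Finite) (hS : S.Finite)
    (hb : Budgeted G F S h) (x : V) : (block G F S h x).Finite :=
  finite_setOf_reflTransGen (fun z => (hFup z).subset fun _ hy => ⟨hy.1, hy.2.1⟩)
    (wellFounded_flip_of_forall_not_chain (not_forall_pulls hS hb)) x

theorem notMem_of_mem_block {x z : V} (hx : x ∉ S) (hz : z ∈ block G F S h x) : z ∉ S := by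
  induction hz with
  | refl => exact hx
  | tail _ hyz _ => exact hyz.2.2.1

theorem le_of_notMem_block {x z y d : V} (hz : z ∈ block G F S h x) (hzy : G.Adj z y)
    (hlt : F z < F y) (hyS : y ∉ S) (hyB : y ∉ block G F S h x) (hd : d ∈ S) (hzd : G.Adj z d) :
    ω ^ (F y + 3) ≤ h d :=
  not_lt.mp fun hdlt => hyB (ReflTransGen.tail hz ⟨hzy, hlt, hyS, d, hd, hzd, hdlt⟩)

variable (G F) in
def blockExits (S : Set V) (h : V → Ordinal.{u}) (x z : V) : Set V :=
  {y | G.Adj z y ∧ F z < F y ∧ y ∉ S ∧ y ∉ block G F S h x}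

variable (G F) in
/-- The exponent of the height given to a new vertex `z`: large enough for every neighbour of
`z` that stays unplaced. -/
noncomputable def blockExponent (S : Set V) (h : V → Ordinal.{u}) (x z : V) : Ordinal.{u} :=
  F z ⊔ sSup ((F · + 1) '' blockExits G F S h x z)

theorem blockExponent_cases {x z : V} (hfin : (blockExits G F S h x z).Finite) :
    blockExponent G F S h x z = F z ∨
      ∃ y ∈ blockExits G F S h x z, blockExponent G F S h x z = F y + 1 := by
  rcases ((F · + 1) '' blockExits G F S h x z).eq_empty_or_nonempty with he | hne
  · simp [blockExponent, he]
  · obtain ⟨y, hy, hsup⟩ := hne.csSup_mem (hfin.image _)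
    rcases le_total (F z) (F y + 1) with hle | hle
    · exact Or.inr ⟨y, hy, by rw [blockExponent, ← hsup, sup_of_le_right hle]⟩
    · exact Or.inl (by rw [blockExponent, ← hsup, sup_of_le_left hle])

theorem add_one_le_blockExponent (hF : ∀ u v, G.Adj u v → F u ≠ F v) {x z y : V}
    (hfin : (blockExits G F S h x z).Finite) (hzy : G.Adj z y) (hyS : y ∉ S)
    (hyB : y ∉ block G F S h x) : F y + 1 ≤ blockExponent G F S h x z := by
  unfold blockExponent
  rcases (hF z y hzy).lt_or_gt with hlt | hlt
  · exact le_sup_of_le_right (le_csSup (hfin.image _).bddAbove ⟨y, ⟨hzy, hlt, hyS, hyB⟩, rfl⟩)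
  · exact le_sup_of_le_left (Order.add_one_le_of_lt hlt)

theorem omega0_opow_blockExponent_le (hb : Budgeted G F S h) {x z d : V} (hx : x ∉ S)
    (hz : z ∈ block G F S h x) (hfin : (blockExits G F S h x z).Finite) (hd : d ∈ S)
    (hzd : G.Adj z d) : ω ^ (blockExponent G F S h x z + 2) ≤ h d := by
  rcases blockExponent_cases hfin with he | ⟨y, ⟨hzy, hlt, hyS, hyB⟩, he⟩ <;> rw [he]
  · exact hb d hd z (notMem_of_mem_block hx hz) hzd.symm
  · rw [add_assoc, show (1 : Ordinal) + 2 = 3 by norm_num]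
    exact le_of_notMem_block hz hzy hlt hyS hyB hd hzd

variable (G F) in
/-- New heights are distinct for distinct `ι v`, and stay below `ω ^ (e + 2)`. -/
noncomputable def blockHeight (ι : V → ℕ) (S : Set V) (h : V → Ordinal.{u}) (x v : V) :
    Ordinal.{u} :=
  open Classical in
  if v ∈ block G F S h x then ω ^ (blockExponent G F S h x v + 1) + ι v else h v

variable (G F) in
structure Stage where
  S : Set V
  h : V → Ordinal.{u}
  finite : S.Finite
  injOn : ∀ u ∈ S, ∀ v ∈ S, G.Adj u v → h u ≠ h v
  budgeted : Budgeted G F S h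

def Stage.ExtendsTo (s t : Stage G F) : Prop :=
  s.S ⊆ t.S ∧ (∀ v ∈ s.S, t.h v = s.h v) ∧
    ∀ d ∈ s.S, ∀ z ∈ t.S, z ∉ s.S → G.Adj d z → t.h z < t.h d

theorem Stage.exists_extendsTo (hF : ∀ u v, G.Adj u v → F u ≠ F v)
    (hFup : ∀ v, {u | G.Adj v u ∧ F v < F u}.Finite) {ι : V → ℕ} (hι : Function.Injective ι)
    (s : Stage G F) (x : V) : ∃ t : Stage G F, s.ExtendsTo t ∧ x ∈ t.S := by
  classical
  by_cases hx : x ∈ s.S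
  · exact ⟨s, ⟨subset_rfl, fun _ _ => rfl, fun _ _ z hz hzs => (hzs hz).elim⟩, hx⟩
  set B := block G F s.S s.h x
  set h' := blockHeight G F ι s.S s.h x
  have hBS : ∀ z ∈ B, z ∉ s.S := fun z hz => notMem_of_mem_block hx hz
  have hexits : ∀ z, (blockExits G F s.S s.h x z).Finite := fun z =>
    (hFup z).subset fun _ hy => ⟨hy.1, hy.2.1⟩
  have hold : ∀ v ∈ s.S, h' v = s.h v := fun v hv => if_neg fun hvB => hBS v hvB hv
  have hnew : ∀ z ∈ B, h' z = ω ^ (blockExponent G F s.S s.h x z + 1) + ι z :=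
    fun z hz => if_pos hz
  have hnew_lt : ∀ d ∈ s.S, ∀ z ∈ B, G.Adj d z → h' z < h' d := fun d hd z hz hdz => by
    rw [hnew z hz, hold d hd]
    exact (omega0_opow_add_natCast_lt _ _).trans_le
      (omega0_opow_blockExponent_le s.budgeted hx hz (hexits z) hd hdz.symm)
  have hinj : ∀ u ∈ s.S ∪ B, ∀ v ∈ s.S ∪ B, G.Adj u v → h' u ≠ h' v := by
    rintro u (hu | hu) v (hv | hv) huv
    · rw [hold u hu, hold v hv]; exact s.injOn u hu v hv huv
    · exact (hnew_lt u hu v hv huv).ne'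
    · exact (hnew_lt v hv u hu huv.symm).ne
    · rw [hnew u hu, hnew v hv]
      exact fun heq => G.ne_of_adj huv (hι (natCast_eq_of_omega0_opow_add_eq heq))
  have hbudget : Budgeted G F (s.S ∪ B) h' := by
    rintro d (hd | hd) y hy hdy <;> rw [Set.mem_union, not_or] at hy
    · rw [hold d hd]; exact s.budgeted d hd y hy.1 hdy
    · rw [hnew d hd]
      refine le_trans ((opow_le_opow_iff_right one_lt_omega0).mpr ?_) le_self_add
      rw [show (2 : Ordinal) = 1 + 1 by norm_num, ← add_assoc]
      exact add_le_add_left (add_one_le_blockExponent hF (hexits d) hdy hy.1 hy.2) 1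
  refine ⟨⟨s.S ∪ B, h', s.finite.union (block_finite hFup s.finite s.budgeted x), hinj, hbudget⟩,
    ⟨Set.subset_union_left, hold, fun d hd z hz hzs => hnew_lt d hd z (hz.resolve_left hzs)⟩,
    Or.inr ReflTransGen.refl⟩

theorem exists_height_of_chain (s : ℕ → Stage G F) (hs : ∀ n, (s n).ExtendsTo (s (n + 1)))
    (h0 : (s 0).S = ∅) (hcover : ∀ v, ∃ n, v ∈ (s n).S) :
    ∃ h : V → Ordinal.{u}, (∀ u v, G.Adj u v → h u ≠ h v) ∧
      ∀ v, {u | ReflTransGen (fun a b => G.Adj a b ∧ h b < h a) u v}.Finite := by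
  classical
  have hmono : Monotone fun n => (s n).S := monotone_nat_of_le_succ fun n => (hs n).1
  have hstable : ∀ m n, m ≤ n → ∀ v ∈ (s m).S, (s n).h v = (s m).h v := by
    intro m n hmn v hv
    induction n, hmn using Nat.le_induction with
    | base => rfl
    | succ n hmn ih => rw [(hs n).2.1 v (hmono hmn hv), ih]
  let idx : V → ℕ := fun v => Nat.find (hcover v)
  let h : V → Ordinal.{u} := fun v => (s (idx v)).h v
  have hh : ∀ n, ∀ v ∈ (s n).S, (s n).h v = h v := fun n v hv =>
    hstable _ n (Nat.find_min' _ hv) v (Nat.find_spec (hcover v))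
  have hmem : ∀ m v, idx v ≤ m → v ∈ (s m).S := fun m v hm => hmono hm (Nat.find_spec (hcover v))
  have hidx : ∀ a b, G.Adj a b → h b < h a → idx a ≤ idx b := by
    intro a b hab hlt
    by_contra! hba
    have hpos : idx a ≠ 0 := fun h0' => by
      have ha := Nat.find_spec (hcover a)
      rw [show Nat.find (hcover a) = 0 from h0', h0] at ha
      exact ha
    obtain ⟨m, hm⟩ : ∃ m, idx a = m + 1 := Nat.exists_eq_add_one.mpr (Nat.pos_of_ne_zero hpos)
    have hnew := (hs m).2.2 b (hmem m b (by omega)) a (hm ▸ hmem _ a le_rfl)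
      (Nat.find_min (hcover a) (show m < idx a by omega)) hab.symm
    rw [hh _ a (hm ▸ hmem _ a le_rfl), hh _ b (hmem _ b (by omega))] at hnew
    exact hnew.not_gt hlt
  refine ⟨h, fun u v huv => ?_, fun v => ((s (idx v)).finite).subset fun u hu => ?_⟩
  · have hu := hmem (max (idx u) (idx v)) u (le_max_left _ _)
    have hv := hmem (max (idx u) (idx v)) v (le_max_right _ _)
    rw [← hh _ u hu, ← hh _ v hv]
    exact (s _).injOn u hu v hv huv
  · refine hmem _ u ?_
    induction hu using ReflTransGen.head_induction_on with
    | refl => exact le_rfl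
    | head hab _ ih => exact (hidx _ _ hab.1 hab.2).trans ih

theorem exists_height [Countable V] (hF : ∀ u v, G.Adj u v → F u ≠ F v)
    (hFup : ∀ v, {u | G.Adj v u ∧ F v < F u}.Finite) :
    ∃ h : V → Ordinal.{u}, (∀ u v, G.Adj u v → h u ≠ h v) ∧
      ∀ v, {u | ReflTransGen (fun a b => G.Adj a b ∧ h b < h a) u v}.Finite := by
  cases isEmpty_or_nonempty V
  · exact ⟨0, fun u => isEmptyElim u, fun _ => Set.toFinite _⟩
  obtain ⟨e, he⟩ := exists_surjective_nat V
  obtain ⟨ι, hι⟩ := Countable.exists_injective_nat V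
  choose next hnext hmem using Stage.exists_extendsTo hF hFup hι
  let s : ℕ → Stage G F := fun n =>
    Nat.rec ⟨∅, 0, Set.finite_empty, by simp, by simp [Budgeted]⟩ (fun n t => next t (e n)) n
  refine exists_height_of_chain s (fun n => hnext _ _) rfl fun v => ?_
  obtain ⟨n, rfl⟩ := he v
  exact ⟨n + 1, hmem _ _⟩

end Staging

theorem exists_equiv_not_infIncrPath {V : Type*} [Countable V] [Infinite V] {G : SimpleGraph V}
    (hW : ¬ ∃ W : Set V, W.Nonempty ∧ ∀ v ∈ W, {u | u ∈ W ∧ G.Adj v u}.Infinite) :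
    ∃ φ : V ≃ ℕ, ¬ InfIncrPath G φ := by
  obtain ⟨F, hF, hFup⟩ := G.exists_ordinal_labeling hW
  obtain ⟨h, hinj, hanc⟩ := exists_height hF hFup
  let r : V → V → Prop := fun a b => G.Adj a b ∧ h b < h a
  have hr : ∀ a b, TransGen r a b → h b < h a := fun a b hab => by
    induction hab with
    | single h => exact h.2
    | tail _ h ih => exact h.2.trans ih
  obtain ⟨φ, hφ⟩ := exists_equiv_nat_of_finite_ancestors (fun v h => (hr v v h).false) hanc
  have horient : ∀ u v, G.Adj u v → r u v ∨ r v u := fun u v huv =>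
    (hinj u v huv).lt_or_gt.symm.imp (⟨huv, ·⟩) (⟨huv.symm, ·⟩)
  refine ⟨φ, fun ⟨w, _, hw⟩ => ?_⟩
  obtain ⟨n, hn⟩ := WellFounded.not_rel_apply_succ (r := (· < ·)) fun n => h (w n)
  exact hn (rel_of_adj_of_lt hφ horient (hw n).1 (hw n).2).2

theorem stmt8 {V : Type*} [Countable V] [Infinite V] (G : SimpleGraph V) :
    FIN G ↔ ((∀ k : ℕ, ¬ HasChiStarPartition G k) ∧
      ¬ ∃ W : Set V, W.Nonempty ∧ ∀ v ∈ W, {u | u ∈ W ∧ G.Adj v u}.Infinite) := by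
  constructor
  · rintro ⟨hpaths, φ, hφ⟩
    refine ⟨fun k hk => ?_, fun ⟨W, hne, hinf⟩ =>
      hφ (infIncrPath_of_forall_infinite hne hinf φ.injective)⟩
    obtain ⟨ψ, hψ⟩ := exists_equiv_not_incrPathOn hk
    exact hψ (hpaths ψ (k + 1))
  · rintro ⟨hχ, hW⟩
    exact ⟨fun φ k => by_contra fun hk =>
      hχ _ (hasChiStarPartition_of_not_incrPathOn φ.injective hk),
      exists_equiv_not_infIncrPath hW⟩
end

section
/- Let D=(V,E) be a countable directed graph in which every vertex v has finite degree, i.e., there are only finitely many u with (v,u) ∈ E or (u,v) ∈ E. Then there exists a bijection φ: V → ℕ such that D contains no infinite increasing directed path with respect to φ. -/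
/-!
Exhaust `V` by finite sets `S₀ = ∅ ⊆ S₁ ⊆ ⋯`, where `S_{k+1}` adds to `S_k` its out-neighbours
and the `k`-th vertex of an enumeration. The depth of `v` (the first `k` with `v ∈ S_k`) has
finite sublevel sets and grows by at most one along an edge. Number `V` by depth, with the depths
`2 i` and `2 i + 1` swapped. An injective path leaves every finite set, so it climbs through all
large depths one at a time and at some point takes an edge from depth `2 i` to `2 i + 1`, along
which the numbering decreases.
-/

open Function

theorem exists_equiv_nat_lt_of_lt_of_injective {α β : Type*} [Infinite α] [LinearOrder β]
    {key : α → β} (hkey : Injective key) (hfin : ∀ a, {b | key b < key a}.Finite) :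
    ∃ φ : α ≃ ℕ, ∀ a b, key a < key b → φ a < φ b := by
  set φ : α → ℕ := fun a => (hfin a).toFinset.card
  have hmono : ∀ a b, key a < key b → φ a < φ b := by
    intro a b hab
    refine Finset.card_lt_card ⟨fun c hc => ?_, fun h => ?_⟩
    · simp only [Set.Finite.mem_toFinset, Set.mem_ofPred_eq] at hc ⊢
      exact hc.trans hab
    · exact lt_irrefl _ ((hfin a).mem_toFinset.1 (h ((hfin b).mem_toFinset.2 hab)))
  have hinj : Injective φ := by
    intro a b h
    by_contra hne
    rcases (hkey.ne hne).lt_or_gt with hab | hab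
    · exact (hmono _ _ hab).ne h
    · exact (hmono _ _ hab).ne' h
  have hsurj : Surjective φ := by
    intro n
    obtain ⟨_, ⟨a, rfl⟩, hn⟩ := (Set.infinite_range_of_injective hinj).exists_gt n
    -- `φ` maps the `φ a` elements below `a` injectively into `range (φ a)`.
    obtain ⟨b, -, hb⟩ := Finset.surjOn_of_injOn_of_card_le φ
      (s := (hfin a).toFinset) (t := Finset.range (φ a))
      (fun b hb => by simpa using hmono _ _ (by simpa using hb)) hinj.injOn (by simp [φ])
      (by simpa using hn)
    exact ⟨b, hb⟩
  exact ⟨Equiv.ofBijective φ ⟨hinj, hsurj⟩, hmono⟩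

theorem exists_equiv_nat_lt_of_lt {α : Type*} [Countable α] [Infinite α] {g : α → ℕ}
    (hg : ∀ n, {a | g a ≤ n}.Finite) : ∃ φ : α ≃ ℕ, ∀ a b, g a < g b → φ a < φ b := by
  obtain ⟨e, he⟩ := Countable.exists_injective_nat α
  obtain ⟨φ, hφ⟩ := exists_equiv_nat_lt_of_lt_of_injective (key := fun a => toLex (g a, e a))
    (fun a b h => he (congrArg (·.2) (toLex.injective h)))
    (fun a => (hg (g a)).subset fun b hb => Prod.Lex.monotone_fst _ _ (le_of_lt hb))
  exact ⟨φ, fun a b h => hφ a b (Prod.Lex.lt_iff.2 (Or.inl h))⟩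

section Exhaustion

variable {V : Type*} [DecidableEq V] (N : V → Finset V) (a : ℕ → V)

def exhaustion : ℕ → Finset V
  | 0 => ∅
  | k + 1 => insert (a k) (exhaustion k ∪ (exhaustion k).biUnion N)

noncomputable def depth (v : V) : ℕ := sInf {k | v ∈ exhaustion N a k}

theorem exhaustion_mono : Monotone (exhaustion N a) :=
  monotone_nat_of_le_succ fun _ => Finset.subset_union_left.trans (Finset.subset_insert _ _)

variable {N a}

theorem mem_exhaustion_depth (ha : Surjective a) (v : V) : v ∈ exhaustion N a (depth N a v) := by
  obtain ⟨k, rfl⟩ := ha v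
  exact Nat.sInf_mem (s := {j | a k ∈ exhaustion N a j}) ⟨k + 1, Finset.mem_insert_self _ _⟩

theorem depth_le_of_mem {v : V} {k : ℕ} (h : v ∈ exhaustion N a k) : depth N a v ≤ k :=
  Nat.sInf_le h

theorem depth_le_depth_add_one (ha : Surjective a) {u v : V} (hu : u ∈ N v) :
    depth N a u ≤ depth N a v + 1 :=
  depth_le_of_mem <| Finset.mem_insert_of_mem <| Finset.mem_union_right _ <|
    Finset.mem_biUnion.2 ⟨v, mem_exhaustion_depth ha v, hu⟩

theorem finite_setOf_depth_le (ha : Surjective a) (n : ℕ) : {v | depth N a v ≤ n}.Finite :=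
  (exhaustion N a n).finite_toSet.subset fun v hv =>
    exhaustion_mono N a hv (mem_exhaustion_depth ha v)

end Exhaustion

theorem exists_le_apply_of_injective {V : Type*} {ℓ : V → ℕ} (hℓ : ∀ n, {v | ℓ v ≤ n}.Finite)
    {w : ℕ → V} (hw : Injective w) (M : ℕ) : ∃ j, M ≤ ℓ (w j) := by
  by_contra! h
  exact Set.infinite_range_of_injective hw
    ((hℓ M).subset (Set.range_subset_iff.2 fun j => (h j).le))

theorem exists_eq_and_succ_eq_of_unbounded {f : ℕ → ℕ} (hstep : ∀ j, f (j + 1) ≤ f j + 1)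
    (hunb : ∀ M, ∃ j, M ≤ f j) {n : ℕ} (hn : f 0 ≤ n) : ∃ j, f j = n ∧ f (j + 1) = n + 1 := by
  classical
  have hex : ∃ j, n + 1 ≤ f j := hunb (n + 1)
  have hfirst := Nat.find_spec hex
  obtain ⟨j, hj⟩ : ∃ j, Nat.find hex = j + 1 :=
    Nat.exists_eq_succ_of_ne_zero fun h => by rw [h] at hfirst; omega
  have hbefore := Nat.find_min hex (show j < Nat.find hex by omega)
  rw [hj] at hfirst
  have := hstep j
  exact ⟨j, by omega, by omega⟩

theorem stmt19 {V : Type*} [Countable V] [Infinite V] (E : Set (V × V))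
    (hdeg : ∀ v : V, {u | (v, u) ∈ E ∨ (u, v) ∈ E}.Finite) :
    ∃ φ : V ≃ ℕ,
      ¬ ∃ w : ℕ → V, Function.Injective w ∧
        ∀ i, (w i, w (i + 1)) ∈ E ∧ φ (w i) < φ (w (i + 1)) := by
  classical
  obtain ⟨a, ha⟩ := exists_surjective_nat V
  let N v := ((hdeg v).subset fun u (h : (v, u) ∈ E) => Or.inl h).toFinset
  set ℓ := depth N a
  have hℓ : ∀ n, {v | ℓ v ≤ n}.Finite := finite_setOf_depth_le ha
  -- `ℓ v + 1 - 2 * (ℓ v % 2)` swaps the depths `2 i` and `2 i + 1`.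
  obtain ⟨φ, hφ⟩ := exists_equiv_nat_lt_of_lt (g := fun v => ℓ v + 1 - 2 * (ℓ v % 2))
    fun n => (hℓ (n + 1)).subset fun v hv => by simp only [Set.mem_ofPred_eq] at hv ⊢; omega
  refine ⟨φ, fun ⟨w, hw, hpath⟩ => ?_⟩
  obtain ⟨j, hj, hj1⟩ := exists_eq_and_succ_eq_of_unbounded (f := ℓ ∘ w)
    (fun j => depth_le_depth_add_one ha (Set.Finite.mem_toFinset _ |>.2 (hpath j).1))
    (exists_le_apply_of_injective hℓ hw) (n := 2 * ℓ (w 0)) (by simp only [comp_apply]; omega)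
  simp only [comp_apply] at hj hj1
  exact (hφ _ _ (by omega)).not_gt (hpath j).2
end
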